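/- Let U_j = D_j y_j - (a/2)∑_{i<j} s_{ij} be the type-A Cherednik operators. Then the product identity (∏_{j=1}^r D_j)(∏_{j=1}^r y_j) = ∏_{j=1}^r U_j holds as operators on polynomials, where the products of D_j's and of U_j's are taken in the order j = 1, …, r. -/

import Mathlib

open MvPolynomial Finset

noncomputable section

abbrev Pol (r : ℕ) : Type := MvPolynomial (Fin r) ℂ

/-- Multiplication operator by a polynomial. -/
def mulOp {r : ℕ} (p : Pol r) : Module.End ℂ (Pol r) := LinearMap.mulLeft ℂ p

/-- Partial derivative operator. -/
def pd {r : ℕ} (j : Fin r) : Module.End ℂ (Pol r) := (pderiv j).toLinearMap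

/-- The transposition operator `s_{ij}` swapping the variables `i` and `j`. -/
def swOp {r : ℕ} (i j : Fin r) : Module.End ℂ (Pol r) :=
  (rename ⇑(Equiv.swap i j) : Pol r →ₐ[ℂ] Pol r).toLinearMap

/-- Ordered product `f 0 * f 1 * ⋯ * f (r-1)` of operators. -/
def opProd {r : ℕ} (f : Fin r → Module.End ℂ (Pol r)) : Module.End ℂ (Pol r) :=
  ((List.finRange r).map f).prod

/-- The type-A Dunkl operator `D_j = ∂_j + (a/2) ∑_{i ≠ j} q i j`, where `q i j` is the
difference-quotient operator `f ↦ (y_j - y_i)⁻¹ (1 - s_{ij}) f` (given as data, pinned down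
by the divisibility specification `DunklQuotA`). -/
def dunklA {r : ℕ} (a : ℂ) (q : Fin r → Fin r → Module.End ℂ (Pol r)) (j : Fin r) :
    Module.End ℂ (Pol r) :=
  pd j + (a / 2) • ∑ i ∈ Finset.univ.erase j, q i j

/-- Specification: `q i j` is division of `(1 - s_{ij}) f` by `y_j - y_i`. -/
def DunklQuotA {r : ℕ} (q : Fin r → Fin r → Module.End ℂ (Pol r)) : Prop :=
  ∀ i j : Fin r, i ≠ j → ∀ f : Pol r,
    (X j - X i) * q i j f = f - swOp i j f

/-- The type-A Cherednik operator `U_j = D_j y_j - (a/2) ∑_{i<j} s_{ij}`. -/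
def cherednikA {r : ℕ} (a : ℂ) (q : Fin r → Fin r → Module.End ℂ (Pol r)) (j : Fin r) :
    Module.End ℂ (Pol r) :=
  dunklA a q j * mulOp (X j) - (a / 2) • ∑ i ∈ Finset.univ.filter (fun i => i < j), swOp i j

/-!
Write `Q = y₁ ⋯ y_{m-1}`. The monomial `Q y_m` is fixed by `s_{im}` for `i < m`, and `Q` is fixed
by `s_{im}` for `i > m`; the difference quotients commute with multiplication by
`s_{im}`-invariant polynomials, and `q_{im}(y_m f) = y_m q_{im} f + s_{im} f`. Hence
`D_m (Q y_m) = Q U_m`, and these identities telescope over `m = 1, …, r`.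
-/

variable {r : ℕ}

lemma List.prod_ofFn_mul_eq_prod_ofFn {M : Type*} [Monoid M] {n : ℕ} (d u : Fin n → M)
    (Y : Fin (n + 1) → M) (hY : Y 0 = 1) (h : ∀ k, d k * Y k.succ = Y k.castSucc * u k) :
    (List.ofFn d).prod * Y (Fin.last n) = (List.ofFn u).prod := by
  induction n with
  | zero => simpa using hY
  | succ n ih =>
    rw [List.ofFn_succ', List.ofFn_succ', List.prod_concat, List.prod_concat, mul_assoc,
      ← Fin.succ_last, h, ← mul_assoc]
    exact congrArg (· * u (Fin.last n)) (ih _ _ (Y ∘ Fin.castSucc) hY fun k => h k.castSucc)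

lemma swOp_apply (i j : Fin r) (f : Pol r) : swOp i j f = rename (Equiv.swap i j) f := rfl

lemma swOp_prod_X {s : Finset (Fin r)} {i j : Fin r} (h : i ∈ s ↔ j ∈ s) :
    swOp i j (∏ k ∈ s, X k) = ∏ k ∈ s, X k := by
  rw [swOp_apply, map_prod]
  refine prod_equiv (Equiv.swap i j) (fun k => ?_) fun k _ => rename_X _ _
  rcases eq_or_ne k i with rfl | hki
  · simpa using h
  rcases eq_or_ne k j with rfl | hkj
  · simpa using h.symm
  rw [Equiv.swap_apply_of_ne_of_ne hki hkj]

lemma pderiv_prod_X_mul {s : Finset (Fin r)} {j : Fin r} (hj : j ∉ s) (f : Pol r) :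
    pderiv j ((∏ k ∈ s, X k) * f) = (∏ k ∈ s, X k) * pderiv j f := by
  have hprod : pderiv j (∏ k ∈ s, X k : Pol r) = 0 :=
    prod_induction _ (fun g => pderiv j g = 0) (fun g h hg hh => by simp [hg, hh])
      (by simp) fun k hk => pderiv_X_of_ne (ne_of_mem_of_not_mem hk hj)
  rw [pderiv_mul, hprod, zero_mul, zero_add]

lemma X_sub_X_ne_zero {i j : Fin r} (hij : i ≠ j) : (X j - X i : Pol r) ≠ 0 :=
  sub_ne_zero.mpr (X_injective.ne hij.symm)

namespace DunklQuotA

variable {q : Fin r → Fin r → Module.End ℂ (Pol r)} {i j : Fin r}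

lemma apply_mul_of_swOp_eq (hq : DunklQuotA q) (hij : i ≠ j) {g : Pol r} (hg : swOp i j g = g)
    (f : Pol r) :
    q i j (g * f) = g * q i j f := by
  apply mul_left_cancel₀ (X_sub_X_ne_zero hij)
  rw [hq i j hij, swOp_apply, map_mul, ← swOp_apply, ← swOp_apply, hg, mul_left_comm,
    hq i j hij, mul_sub]

lemma apply_X_mul (hq : DunklQuotA q) (hij : i ≠ j) (f : Pol r) :
    q i j (X j * f) = X j * q i j f + swOp i j f := by
  apply mul_left_cancel₀ (X_sub_X_ne_zero hij)
  rw [hq i j hij, swOp_apply, map_mul, rename_X, Equiv.swap_apply_right, ← swOp_apply,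
    mul_add, mul_left_comm, hq i j hij]
  ring

end DunklQuotA

lemma mulOp_apply (p f : Pol r) : mulOp p f = p * f := rfl

lemma dunklA_apply (a : ℂ) (q : Fin r → Fin r → Module.End ℂ (Pol r)) (j : Fin r) (f : Pol r) :
    dunklA a q j f = pderiv j f + (a / 2) • ∑ i ∈ univ.erase j, q i j f := by
  simp [dunklA, pd]

lemma cherednikA_apply (a : ℂ) (q : Fin r → Fin r → Module.End ℂ (Pol r)) (j : Fin r)
    (f : Pol r) :
    cherednikA a q j f = dunklA a q j (X j * f) - (a / 2) • ∑ i ∈ Iio j, swOp i j f := by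
  simp [cherednikA, mulOp, filter_gt_eq_Iio]

theorem dunklA_mul_prod_X_Iic {q : Fin r → Fin r → Module.End ℂ (Pol r)} (hq : DunklQuotA q)
    (a : ℂ) (m : Fin r) :
    dunklA a q m * mulOp (∏ i ∈ Iic m, X i) = mulOp (∏ i ∈ Iio m, X i) * cherednikA a q m := by
  refine LinearMap.ext fun f => ?_
  set Q : Pol r := ∏ i ∈ Iio m, X i
  have hterm : ∀ i ∈ univ.erase m, q i m (Q * X m * f) =
      Q * q i m (X m * f) - if i < m then Q * swOp i m f else 0 := by
    intro i hi
    have him := ne_of_mem_erase hi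
    split_ifs with hlt
    · have hinv : swOp i m (Q * X m) = Q * X m := by
        rw [prod_Iio_mul_eq_prod_Iic]
        exact swOp_prod_X (by simp [hlt.le])
      rw [hq.apply_mul_of_swOp_eq him hinv, hq.apply_X_mul him]
      ring
    · have hinv : swOp i m Q = Q := swOp_prod_X (by simp [hlt])
      rw [mul_assoc, hq.apply_mul_of_swOp_eq him hinv, sub_zero]
  have hfilter : (univ.erase m).filter (· < m) = Iio m := by
    rw [filter_erase, filter_gt_eq_Iio, erase_eq_of_notMem notMem_Iio_self]
  rw [Module.End.mul_apply, Module.End.mul_apply, mulOp_apply, mulOp_apply,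
    ← prod_Iio_mul_eq_prod_Iic, dunklA_apply, cherednikA_apply, dunklA_apply, mul_assoc,
    pderiv_prod_X_mul notMem_Iio_self, ← mul_assoc, sum_congr rfl hterm, sum_sub_distrib,
    ← mul_sum, ← sum_filter, hfilter, ← mul_sum]
  simp only [smul_eq_C_mul]
  ring

/-- The product identity `(∏ⱼ Dⱼ)(∏ⱼ yⱼ) = ∏ⱼ Uⱼ` for the type-A Dunkl and
Cherednik operators, both products over `j = 1,…,r` in increasing order. -/
theorem dunklA_prod_eq_cherednik_prod {r : ℕ} (a : ℂ)
    (q : Fin r → Fin r → Module.End ℂ (Pol r)) (hq : DunklQuotA q) :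
    opProd (dunklA a q) * mulOp (∏ j : Fin r, X j) = opProd (cherednikA a q) := by
  let Y (k : Fin (r + 1)) : Module.End ℂ (Pol r) := mulOp (∏ i with i.castSucc < k, X i)
  have hY0 : Y 0 = 1 := by
    refine LinearMap.ext fun f => ?_
    simp [Y, mulOp]
  have hYlast : Y (Fin.last r) = mulOp (∏ j, X j) := by
    simp [Y, Fin.castSucc_lt_last]
  have hstep (m : Fin r) : dunklA a q m * Y m.succ = Y m.castSucc * cherednikA a q m := by
    simpa [Y, filter_ge_eq_Iic, filter_gt_eq_Iio] using dunklA_mul_prod_X_Iic hq a m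
  rw [opProd, opProd, ← List.ofFn_eq_map, ← List.ofFn_eq_map, ← hYlast]
  exact List.prod_ofFn_mul_eq_prod_ofFn _ _ Y hY0 hstep
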